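/- arXiv:2603.29675 — 2 statements merged into one kernel-verified Lean document; each statement's English description precedes it below -/
import Mathlib

section
/- Let Q be a real symmetric positive semidefinite n×n matrix with ker(Q) = span(1), n ≥ 2, and let Ω := 1ζᵀ + ζ1ᵀ − 2Q† with ζ := diagvec(Q†). Then the (n+1)×(n+1) bordered matrix [[0, 1ᵀ],[1, Ω]] is invertible. -/
/-!
Diagonalise the symmetric matrix `Q = U D Uᵀ`; then `U D⁺ Uᵀ` solves the Penrose equations, so
`B := pinv Q` satisfies them. From `Q B Q = Q` and the symmetry of `Q B` one gets that `Q B` fixes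
`1^⊥ = range Q`. If `(a, v)` lies in the kernel of the bordered matrix, then `∑ vᵢ = 0`, so
`Ω v = (ζ ⬝ v) 1 - 2 B v` and the bottom rows make `B v` constant, i.e. `B v ∈ ker Q`. Hence
`v = Q B v = 0`, and then `a = 0`.
-/

open Matrix Classical

/-- The Moore–Penrose pseudoinverse of a real matrix, defined via its four
characterizing Penrose equations (which have a unique solution). -/
noncomputable def pinv {m k : Type*} [Fintype m] [Fintype k]
    (A : Matrix m k ℝ) : Matrix k m ℝ :=
  if h : ∃ X : Matrix k m ℝ,
      A * X * A = A ∧ X * A * X = X ∧ (A * X)ᵀ = A * X ∧ (X * A)ᵀ = X * A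
  then h.choose else 0

namespace Matrix

variable {ι m k : Type*} [Fintype ι] [Fintype m] [Fintype k]

def IsMoorePenroseInverse (A : Matrix m k ℝ) (X : Matrix k m ℝ) : Prop :=
  A * X * A = A ∧ X * A * X = X ∧ (A * X)ᵀ = A * X ∧ (X * A)ᵀ = X * A

theorem isMoorePenroseInverse_pinv {A : Matrix m k ℝ} (h : ∃ X, IsMoorePenroseInverse A X) :
    IsMoorePenroseInverse A (pinv A) := by
  unfold IsMoorePenroseInverse at h
  rw [pinv, dif_pos h]
  exact h.choose_spec

theorem isMoorePenroseInverse_diagonal_inv [DecidableEq ι] (d : ι → ℝ) :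
    IsMoorePenroseInverse (diagonal d) (diagonal d⁻¹) := by
  refine ⟨?_, ?_, ?_, ?_⟩ <;> simp only [diagonal_mul_diagonal, diagonal_transpose] <;>
    congr 1 <;> ext i
  · exact mul_inv_mul_cancel (d i)
  · simpa using mul_inv_mul_cancel (d i)⁻¹

theorem IsMoorePenroseInverse.orthogonal_conj [DecidableEq ι] {a b U : Matrix ι ι ℝ}
    (hab : IsMoorePenroseInverse a b) (hU : Uᵀ * U = 1) :
    IsMoorePenroseInverse (U * a * Uᵀ) (U * b * Uᵀ) := by
  have hmul (x y : Matrix ι ι ℝ) : U * x * Uᵀ * (U * y * Uᵀ) = U * (x * y) * Uᵀ := by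
    simp only [Matrix.mul_assoc, ← Matrix.mul_assoc Uᵀ U, hU, Matrix.one_mul]
  have htr (x : Matrix ι ι ℝ) : (U * x * Uᵀ)ᵀ = U * xᵀ * Uᵀ := by
    simp only [transpose_mul, transpose_transpose, Matrix.mul_assoc]
  obtain ⟨h₁, h₂, h₃, h₄⟩ := hab
  exact ⟨by rw [hmul, hmul, h₁], by rw [hmul, hmul, h₂], by rw [hmul, htr, h₃],
    by rw [hmul, htr, h₄]⟩

theorem IsHermitian.exists_isMoorePenroseInverse [DecidableEq ι] {A : Matrix ι ι ℝ}
    (hA : A.IsHermitian) : ∃ X, IsMoorePenroseInverse A X := by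
  set U : Matrix ι ι ℝ := (hA.eigenvectorUnitary : Matrix ι ι ℝ)
  have hAU : A = U * diagonal hA.eigenvalues * Uᵀ := by
    have := hA.spectral_theorem
    rwa [Unitary.conjStarAlgAut_apply, star_eq_conjTranspose, conjTranspose_eq_transpose_of_trivial,
      Function.comp_def] at this
  have hU : Uᵀ * U = 1 := by
    rw [← conjTranspose_eq_transpose_of_trivial, ← star_eq_conjTranspose]
    exact Unitary.coe_star_mul_self hA.eigenvectorUnitary
  rw [hAU]
  exact ⟨_, (isMoorePenroseInverse_diagonal_inv _).orthogonal_conj hU⟩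

theorem IsMoorePenroseInverse.mul_mulVec_eq_self_of_sum_eq_zero {Q B : Matrix ι ι ℝ}
    (hB : IsMoorePenroseInverse Q B) (hQ : Q.IsSymm)
    (hker : ∀ v : ι → ℝ, Q *ᵥ v = 0 ↔ ∃ c : ℝ, v = fun _ => c) {v : ι → ℝ}
    (hv : ∑ i, v i = 0) : (Q * B) *ᵥ v = v := by
  obtain ⟨h₁, -, h₃, -⟩ := hB
  have hQP : Q * (Q * B) = Q := by
    simpa only [transpose_mul, h₃, hQ.eq] using congrArg transpose h₁
  have hP1 : (Q * B) *ᵥ 1 = 0 := by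
    rw [← h₃, transpose_mul, ← mulVec_mulVec, hQ.eq, (hker 1).2 ⟨1, rfl⟩, mulVec_zero]
  obtain ⟨c, hc⟩ := (hker (v - (Q * B) *ᵥ v)).1 (by rw [mulVec_sub, mulVec_mulVec, hQP, sub_self])
  have hsum : ∑ i, (v - (Q * B) *ᵥ v) i = 0 := by
    rw [← one_dotProduct, dotProduct_sub, dotProduct_mulVec, ← mulVec_transpose, h₃, hP1,
      zero_dotProduct, one_dotProduct, hv, sub_zero]
  rw [hc, Finset.sum_const, Finset.card_univ, nsmul_eq_mul, mul_eq_zero] at hsum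
  refine (sub_eq_zero.1 ?_).symm
  rw [hc]
  funext i
  exact hsum.resolve_left (Nat.cast_ne_zero.2 (Fintype.card_pos_iff.2 ⟨i⟩).ne')

theorem isUnit_det_fromBlocks_zero_ones {K : Type*} [Field K] [DecidableEq ι] [Nonempty ι]
    (Ω : Matrix ι ι K)
    (hΩ : ∀ v : ι → K, ∑ i, v i = 0 → (∃ c : K, Ω *ᵥ v = fun _ => c) → v = 0) :
    IsUnit (fromBlocks (0 : Matrix (Fin 1) (Fin 1) K) (of fun _ _ => (1 : K))
      (of fun _ _ => (1 : K)) Ω).det := by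
  rw [isUnit_iff_ne_zero, Ne, ← exists_mulVec_eq_zero_iff]
  rintro ⟨u, hu, hNu⟩
  rw [fromBlocks_mulVec] at hNu
  set a := u (Sum.inl 0)
  set v := u ∘ Sum.inr
  have htop : ∑ i, v i = 0 := by
    simpa [mulVec, dotProduct] using congrFun hNu (Sum.inl 0)
  have hbot : Ω *ᵥ v = fun _ => -a := by
    funext i
    rw [eq_neg_iff_add_eq_zero, add_comm]
    simpa [mulVec, dotProduct] using congrFun hNu (Sum.inr i)
  have hv : v = 0 := hΩ v htop ⟨-a, hbot⟩
  have ha : a = 0 := by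
    obtain ⟨i⟩ := ‹Nonempty ι›
    simpa [hv] using (congrFun hbot i).symm
  refine hu (funext fun x => ?_)
  rcases x with j | i
  · rw [Fin.fin_one_eq_zero j]
    exact ha
  · exact congrFun hv i

def resistanceMatrix {R : Type*} [CommRing R] (ζ : ι → R) (B : Matrix ι ι R) : Matrix ι ι R :=
  of (fun _ j => ζ j) + of (fun i _ => ζ i) - 2 • B

theorem resistanceMatrix_mulVec_of_sum_eq_zero {R : Type*} [CommRing R] (ζ : ι → R)
    (B : Matrix ι ι R) {v : ι → R} (hv : ∑ i, v i = 0) :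
    resistanceMatrix ζ B *ᵥ v = (fun _ => ζ ⬝ᵥ v) - 2 • B *ᵥ v := by
  have hrow : of (fun (_ : ι) j => ζ j) *ᵥ v = fun _ => ζ ⬝ᵥ v := rfl
  have hcol : of (fun i (_ : ι) => ζ i) *ᵥ v = 0 := by
    funext i
    simp [mulVec, dotProduct, ← Finset.mul_sum, hv]
  rw [resistanceMatrix, sub_mulVec, add_mulVec, smul_mulVec, hrow, hcol, add_zero]

end Matrix

theorem bordered_resistance_matrix_invertible_general
    {n : ℕ} (hn : 2 ≤ n) (Q : Matrix (Fin n) (Fin n) ℝ)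
    (hQ : Q.PosSemidef)
    (hker : ∀ v : Fin n → ℝ, Q.mulVec v = 0 ↔ ∃ c : ℝ, v = fun _ => c)
    (ζ : Fin n → ℝ)
    (Ω : Matrix (Fin n) (Fin n) ℝ)
    (hΩ : Ω = Matrix.of (fun _ j => ζ j) + Matrix.of (fun i _ => ζ i) - 2 • pinv Q) :
    IsUnit (Matrix.fromBlocks (0 : Matrix (Fin 1) (Fin 1) ℝ)
      (Matrix.of fun _ _ => (1 : ℝ)) (Matrix.of fun _ _ => (1 : ℝ)) Ω).det := by
  have : Nonempty (Fin n) := ⟨⟨0, by omega⟩⟩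
  have hB := isMoorePenroseInverse_pinv hQ.isHermitian.exists_isMoorePenroseInverse
  have hQsymm : Q.IsSymm := isHermitian_iff_isSymm.1 hQ.isHermitian
  refine isUnit_det_fromBlocks_zero_ones Ω fun v hv ⟨c, hc⟩ => ?_
  have hBv : pinv Q *ᵥ v = fun _ => (ζ ⬝ᵥ v - c) / 2 := by
    rw [hΩ, ← resistanceMatrix, resistanceMatrix_mulVec_of_sum_eq_zero ζ _ hv] at hc
    funext i
    have hci := congrFun hc i
    simp only [nsmul_eq_mul, Nat.cast_ofNat, Pi.sub_apply, Pi.mul_apply, Pi.ofNat_apply] at hci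
    linarith
  calc v = (Q * pinv Q) *ᵥ v := (hB.mul_mulVec_eq_self_of_sum_eq_zero hQsymm hker hv).symm
    _ = 0 := by rw [← mulVec_mulVec, (hker _).2 ⟨_, hBv⟩]

theorem bordered_resistance_matrix_invertible
    {n : ℕ} (hn : 2 ≤ n) (Q : Matrix (Fin n) (Fin n) ℝ)
    (hQ : Q.PosSemidef)
    (hker : ∀ v : Fin n → ℝ, Q.mulVec v = 0 ↔ ∃ c : ℝ, v = fun _ => c)
    (ζ : Fin n → ℝ) (hζ : ζ = fun i => pinv Q i i)
    (Ω : Matrix (Fin n) (Fin n) ℝ)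
    (hΩ : Ω = Matrix.of (fun _ j => ζ j) + Matrix.of (fun i _ => ζ i) - 2 • pinv Q) :
    IsUnit (Matrix.fromBlocks (0 : Matrix (Fin 1) (Fin 1) ℝ)
      (Matrix.of fun _ _ => (1 : ℝ)) (Matrix.of fun _ _ => (1 : ℝ)) Ω).det :=
  bordered_resistance_matrix_invertible_general hn Q hQ hker ζ Ω hΩ
end

section
/- With Q symmetric PSD with ker(Q) = span(1), Ω := 1ζᵀ + ζ1ᵀ − 2Q† (ζ = diagvec(Q†)), the resistance curvature and radius satisfy p = Ω^{−1}1 / (1ᵀΩ^{−1}1) and σ² = (1/2)(1ᵀΩ^{−1}1)^{−1}, and moreover σ² = (1/2)pᵀΩp and σ² > 0. -/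
/-!
Let `E = (1/n) 𝟙𝟙ᵀ` be the orthogonal projection onto the constants, i.e. onto `ker Q`. Then
`Q + E` is invertible and `Q† = (Q + E)⁻¹ - E`, so that `Q†Q = 1 - E` and `Q†𝟙 = 0`. These two
identities alone, for an arbitrary vector `ζ`, give `Ω p = 2σ² 𝟙` and
`Ω (-Q/2 + p pᵀ / (2σ²)) = 1`; together with `𝟙ᵀp = 1` this yields all the formulas. Positivity of
`σ²` is where `ζ = diag Q†` enters: `∑ ζ = tr Q† > 0`, as `Q†` is positive semidefinite and
nonzero once `n ≥ 2`.
-/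

open Matrix Classical

theorem eq_of_penrose {m k : Type*} [Fintype m] [Fintype k] {A : Matrix m k ℝ}
    {X Y : Matrix k m ℝ}
    (hX₁ : A * X * A = A) (hX₂ : X * A * X = X) (hX₃ : (A * X)ᵀ = A * X) (hX₄ : (X * A)ᵀ = X * A)
    (hY₁ : A * Y * A = A) (hY₂ : Y * A * Y = Y) (hY₃ : (A * Y)ᵀ = A * Y)
    (hY₄ : (Y * A)ᵀ = Y * A) :
    X = Y := by
  have hXA : X * A = Y * A :=
    calc X * A = (X * (A * Y * A))ᵀ := by rw [hY₁, hX₄]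
      _ = (Y * A)ᵀ * (X * A)ᵀ := by rw [← transpose_mul]; simp only [Matrix.mul_assoc]
      _ = Y * A := by rw [hX₄, hY₄, Matrix.mul_assoc, ← Matrix.mul_assoc A, hX₁]
  have hAX : A * X = A * Y :=
    calc A * X = (A * Y * A * X)ᵀ := by rw [hY₁, hX₃]
      _ = (A * X)ᵀ * (A * Y)ᵀ := by rw [← transpose_mul]; simp only [Matrix.mul_assoc]
      _ = A * Y := by rw [hX₃, hY₃, ← Matrix.mul_assoc, hX₁]
  calc X = X * A * X := hX₂.symm
    _ = Y * A * Y := by rw [Matrix.mul_assoc, hAX, ← Matrix.mul_assoc, hXA]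
    _ = Y := hY₂

theorem pinv_eq_of_penrose {m k : Type*} [Fintype m] [Fintype k] {A : Matrix m k ℝ}
    {X : Matrix k m ℝ}
    (h₁ : A * X * A = A) (h₂ : X * A * X = X) (h₃ : (A * X)ᵀ = A * X) (h₄ : (X * A)ᵀ = X * A) :
    pinv A = X := by
  have hex : ∃ Y : Matrix k m ℝ,
      A * Y * A = A ∧ Y * A * Y = Y ∧ (A * Y)ᵀ = A * Y ∧ (Y * A)ᵀ = Y * A :=
    ⟨X, h₁, h₂, h₃, h₄⟩
  obtain ⟨hY₁, hY₂, hY₃, hY₄⟩ := hex.choose_spec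
  rw [pinv, dif_pos hex]
  exact eq_of_penrose hY₁ hY₂ hY₃ hY₄ h₁ h₂ h₃ h₄

namespace IsIdempotentElem

variable {R : Type*} [Ring R] {Q E y : R}

theorem mul_eq_of_mul_add_eq_one (hE : IsIdempotentElem E) (hQE : Q * E = 0)
    (hy : y * (Q + E) = 1) : y * E = E :=
  calc y * E = y * ((Q + E) * E) := by rw [add_mul, hQE, hE.eq, zero_add]
    _ = E := by rw [← mul_assoc, hy, one_mul]

theorem mul_eq_of_add_mul_eq_one (hE : IsIdempotentElem E) (hEQ : E * Q = 0)
    (hy : (Q + E) * y = 1) : E * y = E :=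
  calc E * y = E * (Q + E) * y := by rw [mul_add, hEQ, hE.eq, zero_add]
    _ = E := by rw [mul_assoc, hy, mul_one]

theorem sub_mul_eq_one_sub (hE : IsIdempotentElem E) (hQE : Q * E = 0) (hEQ : E * Q = 0)
    (hy : y * (Q + E) = 1) : (y - E) * Q = 1 - E := by
  have hyQ : y * Q = 1 - y * E := by rw [← hy, mul_add, add_sub_cancel_right]
  rw [sub_mul, hyQ, hEQ, hE.mul_eq_of_mul_add_eq_one hQE hy, sub_zero]

theorem mul_sub_eq_one_sub (hE : IsIdempotentElem E) (hQE : Q * E = 0) (hEQ : E * Q = 0)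
    (hy : (Q + E) * y = 1) : Q * (y - E) = 1 - E := by
  have hQy : Q * y = 1 - E * y := by rw [← hy, add_mul, add_sub_cancel_right]
  rw [mul_sub, hQy, hQE, hE.mul_eq_of_add_mul_eq_one hEQ hy, sub_zero]

theorem sub_mul_eq_zero (hE : IsIdempotentElem E) (hQE : Q * E = 0) (hy : y * (Q + E) = 1) :
    (y - E) * E = 0 := by
  rw [sub_mul, hE.mul_eq_of_mul_add_eq_one hQE hy, hE.eq, sub_self]

theorem mul_sub_eq_zero (hE : IsIdempotentElem E) (hEQ : E * Q = 0) (hy : (Q + E) * y = 1) :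
    E * (y - E) = 0 := by
  rw [mul_sub, hE.mul_eq_of_add_mul_eq_one hEQ hy, hE.eq, sub_self]

end IsIdempotentElem

section Pinv

variable {ι : Type*} [Fintype ι] [DecidableEq ι]

theorem isUnit_det_add_of_mulVec_eq_zero {K : Type*} [Field K] {Q E : Matrix ι ι K}
    (hE : IsIdempotentElem E) (hEQ : E * Q = 0) (hker : ∀ v, Q *ᵥ v = 0 → E *ᵥ v = v) :
    IsUnit (Q + E).det := by
  refine isUnit_iff_ne_zero.mpr fun hdet ↦ ?_
  obtain ⟨v, hv0, hv⟩ := exists_mulVec_eq_zero_iff.mpr hdet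
  have hEv : E *ᵥ v = 0 := by
    simpa only [mulVec_mulVec, mul_add, hEQ, hE.eq, zero_add, mulVec_zero] using
      congrArg (E *ᵥ ·) hv
  have hQv : Q *ᵥ v = 0 := by rwa [add_mulVec, hEv, add_zero] at hv
  exact hv0 (by rw [← hker v hQv, hEv])

theorem pinv_eq_inv_add_sub {Q E : Matrix ι ι ℝ} (hE : IsIdempotentElem E) (hEt : Eᵀ = E)
    (hQE : Q * E = 0) (hEQ : E * Q = 0) (hdet : IsUnit (Q + E).det) :
    pinv Q = (Q + E)⁻¹ - E := by
  have hQX := hE.mul_sub_eq_one_sub hQE hEQ (mul_nonsing_inv _ hdet)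
  have hXQ := hE.sub_mul_eq_one_sub hQE hEQ (nonsing_inv_mul _ hdet)
  have hEX := hE.mul_sub_eq_zero hEQ (mul_nonsing_inv _ hdet)
  have hsymm : (1 - E)ᵀ = 1 - E := by rw [transpose_sub, transpose_one, hEt]
  refine pinv_eq_of_penrose ?_ ?_ (hQX ▸ hsymm) (hXQ ▸ hsymm)
  · rw [hQX, sub_mul, Matrix.one_mul, hEQ, sub_zero]
  · rw [hXQ, sub_mul, Matrix.one_mul, hEX, sub_zero]

end Pinv

section MeanProj

variable (ι : Type*) [Fintype ι]

noncomputable def meanProj : Matrix ι ι ℝ := (Fintype.card ι : ℝ)⁻¹ • vecMulVec 1 1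

variable {ι}

theorem meanProj_mulVec (v : ι → ℝ) :
    meanProj ι *ᵥ v = ((Fintype.card ι : ℝ)⁻¹ * ∑ i, v i) • 1 := by
  rw [meanProj, smul_mulVec, vecMulVec_mulVec, one_dotProduct, op_smul_eq_smul, smul_smul]

theorem transpose_meanProj : (meanProj ι)ᵀ = meanProj ι := by
  rw [meanProj, transpose_smul, transpose_vecMulVec]

theorem mul_meanProj_eq_zero {Q : Matrix ι ι ℝ} (hQ : Q *ᵥ 1 = 0) : Q * meanProj ι = 0 := by
  rw [meanProj, Matrix.mul_smul, mul_vecMulVec, hQ, zero_vecMulVec, smul_zero]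

theorem meanProj_mul_eq_zero {Q : Matrix ι ι ℝ} (hQ : Q.IsSymm) (hQ1 : Q *ᵥ 1 = 0) :
    meanProj ι * Q = 0 := by
  rw [meanProj, Matrix.smul_mul, vecMulVec_mul, ← mulVec_transpose, hQ.eq, hQ1, vecMulVec_zero,
    smul_zero]

variable [Nonempty ι]

theorem meanProj_mulVec_one : meanProj ι *ᵥ 1 = 1 := by
  simp [meanProj_mulVec]

theorem trace_meanProj : (meanProj ι).trace = 1 := by
  rw [meanProj, trace_smul, trace_vecMulVec, one_dotProduct_one, smul_eq_mul,
    inv_mul_cancel₀ (by positivity)]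

theorem isIdempotentElem_meanProj : IsIdempotentElem (meanProj ι) := by
  rw [IsIdempotentElem, meanProj, smul_mul_smul, vecMulVec_mul_vecMulVec, one_dotProduct_one,
    vecMulVec_smul, smul_smul, mul_assoc, inv_mul_cancel₀ (by positivity), mul_one]

end MeanProj

section KernelOnes

variable {ι : Type*} [Fintype ι] [DecidableEq ι] [Nonempty ι] {Q : Matrix ι ι ℝ}

theorem isUnit_det_add_meanProj (hQ : Q.IsSymm)
    (hker : ∀ v : ι → ℝ, Q *ᵥ v = 0 ↔ ∃ c : ℝ, v = fun _ => c) :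
    IsUnit (Q + meanProj ι).det := by
  refine isUnit_det_add_of_mulVec_eq_zero isIdempotentElem_meanProj
    (meanProj_mul_eq_zero hQ ((hker 1).mpr ⟨1, rfl⟩)) fun v hv ↦ ?_
  obtain ⟨c, rfl⟩ := (hker v).mp hv
  ext
  simp [meanProj_mulVec]

theorem pinv_eq_inv_add_meanProj_sub (hQ : Q.IsSymm)
    (hker : ∀ v : ι → ℝ, Q *ᵥ v = 0 ↔ ∃ c : ℝ, v = fun _ => c) :
    pinv Q = (Q + meanProj ι)⁻¹ - meanProj ι := by
  have hQ1 : Q *ᵥ 1 = 0 := (hker 1).mpr ⟨1, rfl⟩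
  exact pinv_eq_inv_add_sub isIdempotentElem_meanProj transpose_meanProj
    (mul_meanProj_eq_zero hQ1) (meanProj_mul_eq_zero hQ hQ1) (isUnit_det_add_meanProj hQ hker)

theorem pinv_mul_eq_one_sub_meanProj (hQ : Q.IsSymm)
    (hker : ∀ v : ι → ℝ, Q *ᵥ v = 0 ↔ ∃ c : ℝ, v = fun _ => c) :
    pinv Q * Q = 1 - meanProj ι := by
  have hQ1 : Q *ᵥ 1 = 0 := (hker 1).mpr ⟨1, rfl⟩
  rw [pinv_eq_inv_add_meanProj_sub hQ hker]
  exact isIdempotentElem_meanProj.sub_mul_eq_one_sub (mul_meanProj_eq_zero hQ1)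
    (meanProj_mul_eq_zero hQ hQ1) (nonsing_inv_mul _ (isUnit_det_add_meanProj hQ hker))

theorem pinv_mulVec_one (hQ : Q.IsSymm)
    (hker : ∀ v : ι → ℝ, Q *ᵥ v = 0 ↔ ∃ c : ℝ, v = fun _ => c) :
    pinv Q *ᵥ 1 = 0 := by
  have hXE : pinv Q * meanProj ι = 0 := by
    rw [pinv_eq_inv_add_meanProj_sub hQ hker]
    exact isIdempotentElem_meanProj.sub_mul_eq_zero
      (mul_meanProj_eq_zero ((hker 1).mpr ⟨1, rfl⟩))
      (nonsing_inv_mul _ (isUnit_det_add_meanProj hQ hker))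
  rw [← meanProj_mulVec_one, mulVec_mulVec, hXE, zero_mulVec]

theorem posSemidef_pinv (hQ : Q.PosSemidef)
    (hker : ∀ v : ι → ℝ, Q *ᵥ v = 0 ↔ ∃ c : ℝ, v = fun _ => c) :
    (pinv Q).PosSemidef := by
  have hQs : Q.IsSymm := isHermitian_iff_isSymm.mp hQ.isHermitian
  have hXt : (pinv Q)ᴴ = pinv Q := by
    rw [conjTranspose_eq_transpose_of_trivial, pinv_eq_inv_add_meanProj_sub hQs hker,
      transpose_sub, transpose_nonsing_inv, transpose_add, hQs.eq, transpose_meanProj]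
  have hEX : meanProj ι * pinv Q = 0 := by
    rw [pinv_eq_inv_add_meanProj_sub hQs hker]
    exact isIdempotentElem_meanProj.mul_sub_eq_zero
      (meanProj_mul_eq_zero hQs ((hker 1).mpr ⟨1, rfl⟩))
      (mul_nonsing_inv _ (isUnit_det_add_meanProj hQs hker))
  have hXQX : pinv Q * Q * pinv Q = pinv Q := by
    rw [pinv_mul_eq_one_sub_meanProj hQs hker, sub_mul, Matrix.one_mul, hEX, sub_zero]
  simpa only [hXt, hXQX] using hQ.mul_mul_conjTranspose_same (pinv Q)

theorem trace_pinv_pos (hQ : Q.PosSemidef)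
    (hker : ∀ v : ι → ℝ, Q *ᵥ v = 0 ↔ ∃ c : ℝ, v = fun _ => c) (hcard : 1 < Fintype.card ι) :
    0 < (pinv Q).trace := by
  have hX := posSemidef_pinv hQ hker
  refine hX.trace_nonneg.lt_of_ne fun h0 ↦ ?_
  have htrace := congrArg trace (pinv_mul_eq_one_sub_meanProj
    (isHermitian_iff_isSymm.mp hQ.isHermitian) hker)
  rw [hX.trace_eq_zero_iff.mp h0.symm, Matrix.zero_mul, trace_zero, trace_sub, trace_one,
    trace_meanProj] at htrace
  have : (1 : ℝ) < Fintype.card ι := by exact_mod_cast hcard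
  linarith

end KernelOnes

section ResistanceMatrix

variable {ι : Type*} [Fintype ι] [Nonempty ι] {Q X Ω : Matrix ι ι ℝ}
  {ζ p : ι → ℝ} {σ2 : ℝ}

theorem one_dotProduct_curvature (hQ : Q.IsSymm) (hQ1 : Q *ᵥ 1 = 0)
    (hp : p = (1 / 2 : ℝ) • Q *ᵥ ζ + (Fintype.card ι : ℝ)⁻¹ • 1) :
    1 ⬝ᵥ p = 1 := by
  rw [hp, dotProduct_add, dotProduct_smul, dotProduct_smul, dotProduct_mulVec,
    ← mulVec_transpose, hQ.eq, hQ1, zero_dotProduct, one_dotProduct_one, smul_zero, zero_add,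
    smul_eq_mul, inv_mul_cancel₀ (by positivity)]

theorem resistance_mulVec_curvature [DecidableEq ι] (hQ : Q.IsSymm) (hQ1 : Q *ᵥ 1 = 0)
    (hXQ : X * Q = 1 - meanProj ι) (hX1 : X *ᵥ 1 = 0)
    (hΩ : Ω = vecMulVec 1 ζ + vecMulVec ζ 1 - (2 : ℝ) • X)
    (hp : p = (1 / 2 : ℝ) • Q *ᵥ ζ + (Fintype.card ι : ℝ)⁻¹ • 1)
    (hσ2 : σ2 = 1 / 4 * (ζ ⬝ᵥ Q *ᵥ ζ) + (Fintype.card ι : ℝ)⁻¹ * ∑ i, ζ i) :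
    Ω *ᵥ p = (2 * σ2) • 1 := by
  have hXp : X *ᵥ p = (1 / 2 : ℝ) • (ζ - meanProj ι *ᵥ ζ) := by
    rw [hp, mulVec_add, mulVec_smul, mulVec_smul, hX1, mulVec_mulVec, hXQ, sub_mulVec,
      one_mulVec, smul_zero, add_zero]
  have hζp : ζ ⬝ᵥ p = 1 / 2 * (ζ ⬝ᵥ Q *ᵥ ζ) + (Fintype.card ι : ℝ)⁻¹ * ∑ i, ζ i := by
    rw [hp, dotProduct_add, dotProduct_smul, dotProduct_smul, dotProduct_one, smul_eq_mul,
      smul_eq_mul]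
  rw [hΩ, sub_mulVec, add_mulVec, vecMulVec_mulVec, vecMulVec_mulVec, smul_mulVec, hXp,
    one_dotProduct_curvature hQ hQ1 hp, hζp, meanProj_mulVec, hσ2]
  simp only [op_smul_eq_smul]
  module

theorem resistance_mul_eq_one [DecidableEq ι] (hQ : Q.IsSymm) (hQ1 : Q *ᵥ 1 = 0)
    (hXQ : X * Q = 1 - meanProj ι) (hX1 : X *ᵥ 1 = 0)
    (hΩ : Ω = vecMulVec 1 ζ + vecMulVec ζ 1 - (2 : ℝ) • X)
    (hp : p = (1 / 2 : ℝ) • Q *ᵥ ζ + (Fintype.card ι : ℝ)⁻¹ • 1)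
    (hσ2 : σ2 = 1 / 4 * (ζ ⬝ᵥ Q *ᵥ ζ) + (Fintype.card ι : ℝ)⁻¹ * ∑ i, ζ i) (hσ2_ne : σ2 ≠ 0) :
    Ω * ((-(1 / 2) : ℝ) • Q + (2 * σ2)⁻¹ • vecMulVec p p) = 1 := by
  have hΩQ : Ω * Q = vecMulVec 1 (Q *ᵥ ζ) - (2 : ℝ) • (1 - meanProj ι) := by
    rw [hΩ, sub_mul, add_mul, vecMulVec_mul, vecMulVec_mul, ← mulVec_transpose, hQ.eq,
      ← mulVec_transpose, hQ.eq, hQ1, vecMulVec_zero, add_zero, smul_mul, hXQ]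
  have hΩpp : Ω * vecMulVec p p = (2 * σ2) • vecMulVec 1 p := by
    rw [mul_vecMulVec, resistance_mulVec_curvature hQ hQ1 hXQ hX1 hΩ hp hσ2, smul_vecMulVec]
  rw [Matrix.mul_add, Matrix.mul_smul, Matrix.mul_smul, hΩQ, hΩpp, smul_smul,
    inv_mul_cancel₀ (by positivity), one_smul, hp, vecMulVec_add, vecMulVec_smul, vecMulVec_smul,
    meanProj]
  module

theorem inv_resistance_mulVec_one [DecidableEq ι] (hQ : Q.IsSymm) (hQ1 : Q *ᵥ 1 = 0)
    (hXQ : X * Q = 1 - meanProj ι) (hX1 : X *ᵥ 1 = 0)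
    (hΩ : Ω = vecMulVec 1 ζ + vecMulVec ζ 1 - (2 : ℝ) • X)
    (hp : p = (1 / 2 : ℝ) • Q *ᵥ ζ + (Fintype.card ι : ℝ)⁻¹ • 1)
    (hσ2 : σ2 = 1 / 4 * (ζ ⬝ᵥ Q *ᵥ ζ) + (Fintype.card ι : ℝ)⁻¹ * ∑ i, ζ i) (hσ2_ne : σ2 ≠ 0) :
    Ω⁻¹ *ᵥ 1 = (2 * σ2)⁻¹ • p := by
  rw [inv_eq_right_inv (resistance_mul_eq_one hQ hQ1 hXQ hX1 hΩ hp hσ2 hσ2_ne), add_mulVec,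
    smul_mulVec, hQ1, smul_zero, zero_add, smul_mulVec, vecMulVec_mulVec, op_smul_eq_smul,
    dotProduct_comm, one_dotProduct_curvature hQ hQ1 hp, one_smul]

end ResistanceMatrix

theorem resistance_curvature_radius_via_inverse
    {n : ℕ} (hn : 2 ≤ n) (Q : Matrix (Fin n) (Fin n) ℝ)
    (hQ : Q.PosSemidef)
    (hker : ∀ v : Fin n → ℝ, Q.mulVec v = 0 ↔ ∃ c : ℝ, v = fun _ => c)
    (ζ : Fin n → ℝ) (hζ : ζ = fun i => pinv Q i i)
    (Ω : Matrix (Fin n) (Fin n) ℝ)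
    (hΩ : Ω = Matrix.of (fun _ j => ζ j) + Matrix.of (fun i _ => ζ i) - 2 • pinv Q)
    (p : Fin n → ℝ)
    (hp : p = (1 / 2 : ℝ) • Q.mulVec ζ + (1 / (n : ℝ)) • ((fun _ => 1) : Fin n → ℝ))
    (σ2 : ℝ) (hσ2 : σ2 = (1 / 4) * (ζ ⬝ᵥ Q.mulVec ζ) + (1 / (n : ℝ)) * ∑ i, ζ i) :
    p = (((fun _ => 1) : Fin n → ℝ) ⬝ᵥ Ω⁻¹.mulVec (fun _ => 1))⁻¹ •
        Ω⁻¹.mulVec (fun _ => 1) ∧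
    σ2 = (1 / 2) * (((fun _ => 1) : Fin n → ℝ) ⬝ᵥ Ω⁻¹.mulVec (fun _ => 1))⁻¹ ∧
    σ2 = (1 / 2) * (p ⬝ᵥ Ω.mulVec p) ∧
    0 < σ2 := by
  have : Nonempty (Fin n) := ⟨⟨0, by omega⟩⟩
  have hQs : Q.IsSymm := isHermitian_iff_isSymm.mp hQ.isHermitian
  have hQ1 : Q *ᵥ 1 = 0 := (hker 1).mpr ⟨1, rfl⟩
  have hp' : p = (1 / 2 : ℝ) • Q *ᵥ ζ + (Fintype.card (Fin n) : ℝ)⁻¹ • 1 := by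
    rw [hp, Fintype.card_fin, one_div (n : ℝ)]
    rfl
  have hσ2' : σ2 = 1 / 4 * (ζ ⬝ᵥ Q *ᵥ ζ) + (Fintype.card (Fin n) : ℝ)⁻¹ * ∑ i, ζ i := by
    rw [hσ2, Fintype.card_fin, one_div (n : ℝ)]
  have hΩ' : Ω = vecMulVec 1 ζ + vecMulVec ζ 1 - (2 : ℝ) • pinv Q := by
    rw [hΩ, two_smul, two_smul]
    ext i j
    simp
  simp only [show ((fun _ => 1) : Fin n → ℝ) = 1 from rfl]
  have hσ2_pos : 0 < σ2 := by
    have htrace : 0 < ∑ i, ζ i := hζ ▸ trace_pinv_pos hQ hker (by simp; omega)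
    have hζQζ : 0 ≤ ζ ⬝ᵥ Q *ᵥ ζ := by simpa using hQ.dotProduct_mulVec_nonneg ζ
    rw [hσ2']
    positivity
  have hXQ := pinv_mul_eq_one_sub_meanProj hQs hker
  have hX1 := pinv_mulVec_one hQs hker
  have hΩinv1 := inv_resistance_mulVec_one hQs hQ1 hXQ hX1 hΩ' hp' hσ2' hσ2_pos.ne'
  have h1Ω1 : 1 ⬝ᵥ Ω⁻¹ *ᵥ 1 = (2 * σ2)⁻¹ := by
    rw [hΩinv1, dotProduct_smul, one_dotProduct_curvature hQs hQ1 hp', smul_eq_mul, mul_one]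
  refine ⟨?_, ?_, ?_, hσ2_pos⟩
  · rw [h1Ω1, hΩinv1, inv_inv, smul_smul, mul_inv_cancel₀ (by positivity), one_smul]
  · rw [h1Ω1, inv_inv]
    ring
  · rw [resistance_mulVec_curvature hQs hQ1 hXQ hX1 hΩ' hp' hσ2', dotProduct_smul,
      dotProduct_comm, one_dotProduct_curvature hQs hQ1 hp']
    simp
end
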